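/- For all integers n ≥ 2 and r with 1 ≤ r ≤ n, Σ_{k=1}^{n−1} sin(kπr/(n+1)) sin((k+1)πr/(n+1)) = ((n+1)/2) cos(πr/(n+1)). -/

import Mathlib

open Real Finset

/-- For integers `n ≥ 2` and `1 ≤ r ≤ n`,
`Σ_{k=1}^{n−1} sin(kπr/(n+1)) sin((k+1)πr/(n+1)) = ((n+1)/2) cos(πr/(n+1))`. -/
theorem sum_sin_mul_sin_succ (n r : ℕ) (hn : 2 ≤ n) (hr1 : 1 ≤ r) (hrn : r ≤ n) :
    ∑ k ∈ Finset.Icc 1 (n - 1),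
        Real.sin (k * Real.pi * r / (n + 1)) * Real.sin ((k + 1) * Real.pi * r / (n + 1)) =
      (n + 1) / 2 * Real.cos (Real.pi * r / (n + 1)) := by
  set θ : ℝ := Real.pi * r / (n + 1) with hθ
  have hNpos : (0:ℝ) < (n:ℝ) + 1 := by positivity
  have hrpos : (0:ℝ) < (r:ℝ) := by exact_mod_cast hr1
  have hθpos : 0 < θ := div_pos (by positivity) hNpos
  have hθlt : θ < Real.pi := by
    rw [hθ, div_lt_iff₀ hNpos]
    have : (r:ℝ) < (n:ℝ) + 1 := by exact_mod_cast Nat.lt_succ_of_le hrn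
    nlinarith [Real.pi_pos]
  have hsθ : Real.sin θ ≠ 0 := ne_of_gt (Real.sin_pos_of_pos_of_lt_pi hθpos hθlt)
  have hterm : ∀ k : ℕ, ((k:ℝ) * Real.pi * r / (n + 1)) = k * θ := by
    intro k; rw [hθ]; ring
  -- product-to-sum identity for each term
  have hprod : ∀ k : ℕ, Real.sin (k * θ) * Real.sin ((k + 1) * θ)
      = (Real.cos θ - Real.cos ((2 * k + 1) * θ)) / 2 := by
    intro k
    have e1 : ((k:ℝ) + 1) * θ - k * θ = θ := by ring
    have e2 : ((k:ℝ) + 1) * θ + k * θ = (2 * k + 1) * θ := by ring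
    have h1 : Real.cos θ = Real.cos (((k:ℝ) + 1) * θ) * Real.cos (k * θ)
        + Real.sin (((k:ℝ) + 1) * θ) * Real.sin (k * θ) := by
      rw [← Real.cos_sub, e1]
    have h2 : Real.cos ((2 * (k:ℝ) + 1) * θ) = Real.cos (((k:ℝ) + 1) * θ) * Real.cos (k * θ)
        - Real.sin (((k:ℝ) + 1) * θ) * Real.sin (k * θ) := by
      rw [← Real.cos_add, e2]
    rw [h1, h2]; ring
  have hsum1 : ∑ k ∈ Finset.Icc 1 (n - 1),
      Real.sin (k * Real.pi * r / (n + 1)) * Real.sin ((k + 1) * Real.pi * r / (n + 1))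
      = ∑ k ∈ Finset.Icc 1 (n - 1), (Real.cos θ - Real.cos ((2 * k + 1) * θ)) / 2 := by
    apply Finset.sum_congr rfl
    intro k _
    have hk1 : (((k:ℕ) + 1 : ℕ):ℝ) * Real.pi * r / (n + 1) = ((k:ℝ) + 1) * θ := by
      push_cast [hθ]; ring
    rw [hterm k]
    rw [show ((k:ℝ) + 1) * Real.pi * r / (n + 1) = ((k:ℝ) + 1) * θ by rw [hθ]; ring]
    exact hprod k
  -- telescoping sum for the cosine part
  have hn1 : ((n - 1 : ℕ):ℝ) = (n:ℝ) - 1 := by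
    have h1 : (1:ℕ) ≤ n := by omega
    push_cast [h1]; ring
  have htel : (∑ k ∈ Finset.Icc 1 (n - 1), Real.cos ((2 * (k:ℝ) + 1) * θ)) * (2 * Real.sin θ)
      = Real.sin (2 * n * θ) - Real.sin (2 * θ) := by
    rw [Finset.sum_mul]
    have hstep : ∀ k ∈ Finset.Icc 1 (n - 1),
        Real.cos ((2 * (k:ℝ) + 1) * θ) * (2 * Real.sin θ)
        = Real.sin (2 * ((k:ℝ) + 1) * θ) - Real.sin (2 * (k:ℝ) * θ) := by
      intro k _
      rw [Real.sin_sub_sin]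
      have e1 : (2 * ((k:ℝ) + 1) * θ - 2 * (k:ℝ) * θ) / 2 = θ := by ring
      have e2 : (2 * ((k:ℝ) + 1) * θ + 2 * (k:ℝ) * θ) / 2 = (2 * (k:ℝ) + 1) * θ := by ring
      rw [e1, e2]; ring
    rw [Finset.sum_congr rfl hstep]
    have hIco : Finset.Icc 1 (n - 1) = Finset.Ico 1 n := by
      rw [← Finset.Ico_add_one_right_eq_Icc]; congr 1; omega
    rw [hIco, Finset.sum_Ico_eq_sum_range]
    calc ∑ i ∈ Finset.range (n - 1),
          (Real.sin (2 * (((1 + i : ℕ):ℝ) + 1) * θ) - Real.sin (2 * ((1 + i : ℕ):ℝ) * θ))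
        = ∑ i ∈ Finset.range (n - 1),
          ((fun j : ℕ => Real.sin (2 * ((j:ℝ) + 1) * θ)) (i + 1)
            - (fun j : ℕ => Real.sin (2 * ((j:ℝ) + 1) * θ)) i) := by
          refine Finset.sum_congr rfl fun i _ => ?_
          simp only
          push_cast
          ring_nf
      _ = (fun j : ℕ => Real.sin (2 * ((j:ℝ) + 1) * θ)) (n - 1)
            - (fun j : ℕ => Real.sin (2 * ((j:ℝ) + 1) * θ)) 0 :=
          by exact Finset.sum_range_sub (fun j : ℕ => Real.sin (2 * ((j:ℝ) + 1) * θ)) (n - 1)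
      _ = Real.sin (2 * n * θ) - Real.sin (2 * θ) := by
          simp only [Nat.cast_zero]
          rw [hn1]
          ring_nf
  -- key: sin(2nθ) = -sin(2θ)
  have hkey : Real.sin (2 * n * θ) = - Real.sin (2 * θ) := by
    have h2n : 2 * (n:ℝ) * θ = -(2 * θ) + (r:ℤ) * (2 * Real.pi) := by
      rw [hθ]
      field_simp
      simp only [Int.cast_natCast]; ring
    rw [h2n, Real.sin_add_int_mul_two_pi, Real.sin_neg]
  -- solve for the cosine sum
  have hS : ∑ k ∈ Finset.Icc 1 (n - 1), Real.cos ((2 * (k:ℝ) + 1) * θ)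
      = -2 * Real.cos θ := by
    have h2 : (∑ k ∈ Finset.Icc 1 (n - 1), Real.cos ((2 * (k:ℝ) + 1) * θ)) * (2 * Real.sin θ)
        = (-2 * Real.cos θ) * (2 * Real.sin θ) := by
      rw [htel, hkey, Real.sin_two_mul]; ring
    exact mul_right_cancel₀ (mul_ne_zero two_ne_zero hsθ) h2
  rw [hsum1]
  have hcard : (Finset.Icc 1 (n - 1)).card = n - 1 := by simp
  rw [← Finset.sum_div, Finset.sum_sub_distrib, Finset.sum_const, hcard, nsmul_eq_mul, hn1, hS]
  ring
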